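/- arXiv:2109.02698 — 2 statements merged into one kernel-verified Lean document; each statement's English description precedes it below -/
import Mathlib

section
/- Let r be a positive integer, F a finite field with 2^r elements, and n ≥ 2. Let P(n,F) be the subgroup of Sp(2n,F) consisting of block matrices [[A, A·B],[0, (Aᵀ)⁻¹]] with A ∈ Up_n(F) and B symmetric. Then the center of P(n,F) is exactly the set of block matrices [[I_n, D],[0, I_n]] with D = a·E_{1,1} + b·(E_{1,2} + E_{2,1}) for a, b ∈ F, and this center is isomorphic to (ℤ/2ℤ)^{2r}. -/
/-!
An element `[[A, A B], [0, A⁻ᵀ]]` of `P(n,F)` commutes with a translation `[[1, D], [0, 1]]` iff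
`A D Aᵀ = D`. Testing a central element against `D = E_{j,j}` forces `A = 1`; testing the
remaining `[[1, B], [0, 1]]` against `[[C, 0], [0, C⁻ᵀ]]` with `C = 1 + E_{i,j}` (`i < j`) kills
every entry of `B` outside the span of `E_{1,1}` and `E_{1,2} + E_{2,1}`. Conversely a unitriangular
`C` fixes `e₁` and sends `e₂` to `e₂ + t e₁`, which changes `E_{1,2} + E_{2,1}` by
`2t E_{1,1} = 0` in characteristic `2`. Hence the center is the image of the injective homomorphism
`(a, b) ↦ [[1, a E_{1,1} + b (E_{1,2} + E_{2,1})], [0, 1]]` on `F × F`, an elementary abelian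
`2`-group of order `2 ^ (2r)`.
-/

open Matrix

/-- `M` is an upper unitriangular matrix. -/
def IsUnitriangular {n : ℕ} {F : Type} [Field F]
    (M : Matrix (Fin n) (Fin n) F) : Prop :=
  (∀ i, M i i = 1) ∧ ∀ i j : Fin n, j < i → M i j = 0

theorem AddCommGroup.nonempty_addEquiv_fin_zmod_two {G : Type*} [AddCommGroup G] [Finite G]
    (h : ∀ x : G, x + x = 0) {d : ℕ} (hd : Nat.card G = 2 ^ d) :
    Nonempty (G ≃+ (Fin d → ZMod 2)) := by
  let := AddCommGroup.zmodModule (n := 2) fun x => (two_nsmul x).trans (h x)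
  have : Fintype G := Fintype.ofFinite G
  have hrank : Module.finrank (ZMod 2) G = d := by
    rw [Nat.card_eq_fintype_card, Module.card_eq_pow_finrank (K := ZMod 2), ZMod.card] at hd
    exact Nat.pow_right_injective le_rfl hd
  exact ⟨(Module.finBasisOfFinrankEq _ _ hrank).equivFun.toAddEquiv⟩

theorem Fin.eq_zero_or_eq_one_or_one_lt {m : ℕ} (k : Fin (m + 2)) :
    k = 0 ∨ k = 1 ∨ 1 < k := by
  simp only [Fin.ext_iff, Fin.lt_def, Fin.val_zero, Fin.val_one]
  omega

namespace Matrix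

section Square

variable {n R : Type*} [Fintype n] [CommRing R]

theorem mul_vecMulVec_mul_transpose (C : Matrix n n R) (u v : n → R) :
    C * vecMulVec u v * Cᵀ = vecMulVec (C *ᵥ u) (C *ᵥ v) := by
  rw [mul_vecMulVec, vecMulVec_mul, vecMul_transpose]

variable [DecidableEq n]

theorem one_add_single_mul_mul_transpose_apply (B : Matrix n n R) {i l : n} (j : n)
    (hl : l ≠ i) :
    ((1 + single i j 1) * B * (1 + single i j 1)ᵀ : Matrix n n R) i l = B i l + B j l := by
  simp [transpose_single, Matrix.add_mul, Matrix.mul_add, hl, single_apply_of_col_ne _ _ hl.symm]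

theorem fromBlocks_commute_fromBlocks_one_iff {C : Matrix n n R} (hC : IsUnit C.det)
    (X D : Matrix n n R) :
    Commute (fromBlocks C X 0 (Cᵀ)⁻¹) (fromBlocks 1 D 0 1) ↔ C * D * Cᵀ = D := by
  have : Invertible Cᵀ := invertibleOfIsUnitDet _ (by rwa [det_transpose])
  simp only [Commute, SemiconjBy, fromBlocks_multiply, fromBlocks_inj, Matrix.mul_one,
    Matrix.one_mul, Matrix.mul_zero, Matrix.zero_mul, add_zero, zero_add, and_true, true_and]
  rw [add_comm X, add_left_inj, eq_comm, mul_inv_eq_iff_eq_mul_of_invertible, eq_comm]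

variable (n R) in
def upperUnipotentHom : Multiplicative (Matrix n n R) →* GL (n ⊕ n) R :=
  MonoidHom.toHomUnits
    { toFun := fun D => fromBlocks 1 D.toAdd 0 1
      map_one' := by simp
      map_mul' := fun D E => by simp [fromBlocks_multiply, add_comm] }

end Square

section Corner

variable {m : ℕ} {R : Type*} [CommRing R]

variable (m R) in
/-- `a • E_{1,1} + b • (E_{1,2} + E_{2,1})`, with indices starting at `0`. -/
def symmCorner : R × R →+ Matrix (Fin (m + 2)) (Fin (m + 2)) R :=
  AddMonoidHom.mk' (fun p => p.1 • single 0 0 1 + p.2 • (single 0 1 1 + single 1 0 1))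
    fun p q => by
      simp only [Prod.fst_add, Prod.snd_add, add_smul]
      abel

theorem symmCorner_transpose (p : R × R) : (symmCorner m R p)ᵀ = symmCorner m R p := by
  simp only [symmCorner, AddMonoidHom.mk'_apply, transpose_add, transpose_smul, transpose_single]
  rw [add_comm (single 1 0 _)]

theorem symmCorner_apply_zero_zero (p : R × R) : symmCorner m R p 0 0 = p.1 := by
  simp [symmCorner]

theorem symmCorner_apply_zero_one (p : R × R) : symmCorner m R p 0 1 = p.2 := by
  simp [symmCorner]

theorem symmCorner_apply_one_one (p : R × R) : symmCorner m R p 1 1 = 0 := by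
  simp [symmCorner]

theorem symmCorner_apply_of_one_lt {k : Fin (m + 2)} (hk : 1 < k) (p : R × R)
    (l : Fin (m + 2)) : symmCorner m R p k l = 0 := by
  simp [symmCorner, hk.ne, (zero_lt_one.trans hk).ne]

theorem symmCorner_injective : Function.Injective (symmCorner m R) := fun p q h =>
  Prod.ext (by simpa only [symmCorner_apply_zero_zero] using congrFun₂ h 0 0)
    (by simpa only [symmCorner_apply_zero_one] using congrFun₂ h 0 1)

end Corner

end Matrix

namespace IsUnitriangular

section

variable {n : ℕ} {F : Type} [Field F] {C : Matrix (Fin n) (Fin n) F}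

theorem one : IsUnitriangular (1 : Matrix (Fin n) (Fin n) F) :=
  ⟨one_apply_eq, fun _ _ h => one_apply_ne h.ne'⟩

theorem one_add_single {i j : Fin n} (hij : i < j) (c : F) :
    IsUnitriangular (1 + single i j c) := by
  refine ⟨fun k => ?_, fun k l hlk => ?_⟩
  · simp [single_apply_of_ne _ _ _ _ _ fun h => hij.ne (h.1.trans h.2.symm)]
  · rw [Matrix.add_apply, one_apply_ne hlk.ne', single_apply_of_ne, add_zero]
    rintro ⟨rfl, rfl⟩
    exact lt_asymm hij hlk

theorem isUnit_det (hC : IsUnitriangular C) : IsUnit C.det := by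
  rw [det_of_isUpperTriangular hC.2]
  simp [hC.1]

theorem eq_one_of_forall_conj_single (hC : IsUnitriangular C)
    (h : ∀ j, C * single j j 1 * Cᵀ = single j j 1) : C = 1 := by
  ext k j
  calc C k j = (C * single j j 1 * Cᵀ : Matrix (Fin n) (Fin n) F) k j := by
        rw [single_eq_single_vecMulVec_single, mul_vecMulVec_mul_transpose, mulVec_single_one,
          vecMulVec_apply, col_apply, col_apply, hC.1, mul_one]
    _ = (1 : Matrix (Fin n) (Fin n) F) k j := by
        rw [h j, single_apply, one_apply]
        simp [eq_comm]

end

variable {m : ℕ} {F : Type} [Field F] {C : Matrix (Fin (m + 2)) (Fin (m + 2)) F}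

theorem mulVec_pi_single_zero (hC : IsUnitriangular C) :
    C *ᵥ Pi.single 0 1 = Pi.single 0 1 := by
  rw [mulVec_single_one]
  ext i
  refine Fin.cases ?_ (fun i => ?_) i
  · simp [hC.1]
  · simp [hC.2 _ _ (Fin.succ_pos i)]

theorem mulVec_pi_single_one (hC : IsUnitriangular C) :
    C *ᵥ Pi.single 1 1 = Pi.single 1 1 + C 0 1 • Pi.single 0 1 := by
  rw [mulVec_single_one]
  ext i
  obtain rfl | rfl | hi := i.eq_zero_or_eq_one_or_one_lt
  · simp
  · simp [hC.1]
  · simp [hC.2 _ _ hi, hi.ne', (zero_lt_one.trans hi).ne']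

theorem conj_symmCorner [CharP F 2] (hC : IsUnitriangular C) (p : F × F) :
    C * symmCorner m F p * Cᵀ = symmCorner m F p := by
  simp only [symmCorner, AddMonoidHom.mk'_apply, single_eq_single_vecMulVec_single,
    Matrix.mul_add, Matrix.add_mul, Matrix.mul_smul, Matrix.smul_mul, mul_vecMulVec_mul_transpose,
    hC.mulVec_pi_single_zero, hC.mulVec_pi_single_one, vecMulVec_add, add_vecMulVec,
    smul_vecMulVec, vecMulVec_smul]
  rw [add_add_add_comm, CharTwo.add_self_eq_zero, add_zero]

end IsUnitriangular

theorem Matrix.eq_symmCorner_of_forall_conj {m : ℕ} {F : Type} [Field F]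
    {B : Matrix (Fin (m + 2)) (Fin (m + 2)) F} (hB : Bᵀ = B)
    (h : ∀ C, IsUnitriangular C → C * B * Cᵀ = B) : B = symmCorner m F (B 0 0, B 0 1) := by
  have hzero {i j l : Fin (m + 2)} (hij : i < j) (hl : l ≠ i) : B j l = 0 := by
    have := congrFun₂ (h _ (IsUnitriangular.one_add_single hij 1)) i l
    rwa [one_add_single_mul_mul_transpose_apply B j hl, add_eq_left] at this
  have h01 : (0 : Fin (m + 2)) < 1 := by simp
  have hfar {k : Fin (m + 2)} (hk : 1 < k) (l : Fin (m + 2)) : B k l = 0 := by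
    obtain rfl | hl := eq_or_ne l 0
    · exact hzero hk zero_ne_one
    · exact hzero (h01.trans hk) hl
  have hsymm (k l : Fin (m + 2)) : B k l = B l k := congrFun₂ hB l k
  have hsymm' (p : F × F) (k l : Fin (m + 2)) :
      symmCorner m F p k l = symmCorner m F p l k :=
    congrFun₂ (symmCorner_transpose p) l k
  ext k l
  obtain rfl | rfl | hk := k.eq_zero_or_eq_one_or_one_lt
  · obtain rfl | rfl | hl := l.eq_zero_or_eq_one_or_one_lt
    · rw [symmCorner_apply_zero_zero]
    · rw [symmCorner_apply_zero_one]
    · rw [hsymm, hfar hl, hsymm', symmCorner_apply_of_one_lt hl]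
  · obtain rfl | rfl | hl := l.eq_zero_or_eq_one_or_one_lt
    · rw [hsymm, hsymm', symmCorner_apply_zero_one]
    · rw [hzero h01 one_ne_zero, symmCorner_apply_one_one]
    · rw [hsymm, hfar hl, hsymm', symmCorner_apply_of_one_lt hl]
  · rw [hfar hk, symmCorner_apply_of_one_lt hk]

section SylowCenter

variable {n m : ℕ} {F : Type} [Field F]

variable (n F) in
def symplecticSylowCarrier : Set (GL (Fin n ⊕ Fin n) F) :=
  {M | ∃ A B : Matrix (Fin n) (Fin n) F, IsUnitriangular A ∧ Bᵀ = B ∧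
    (M : Matrix (Fin n ⊕ Fin n) (Fin n ⊕ Fin n) F) = fromBlocks A (A * B) 0 (Aᵀ)⁻¹}

theorem exists_mem_symplecticSylowCarrier {A B : Matrix (Fin n) (Fin n) F}
    (hA : IsUnitriangular A) (hB : Bᵀ = B) : ∃ N ∈ symplecticSylowCarrier n F,
      (N : Matrix (Fin n ⊕ Fin n) (Fin n ⊕ Fin n) F) = fromBlocks A (A * B) 0 (Aᵀ)⁻¹ := by
  have hdet : IsUnit (fromBlocks A (A * B) 0 (Aᵀ)⁻¹).det := by
    rw [det_fromBlocks_zero₂₁, det_nonsing_inv, det_transpose]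
    exact hA.isUnit_det.mul hA.isUnit_det.ringInverse
  exact ⟨nonsingInvUnit _ hdet, ⟨A, B, hA, hB, rfl⟩, rfl⟩

variable (m F) in
def cornerUnipotentHom : Multiplicative (F × F) →* GL (Fin (m + 2) ⊕ Fin (m + 2)) F :=
  (upperUnipotentHom _ F).comp (AddMonoidHom.toMultiplicative (symmCorner m F))

theorem coe_cornerUnipotentHom (p : Multiplicative (F × F)) :
    (cornerUnipotentHom m F p).val = fromBlocks 1 (symmCorner m F p.toAdd) 0 1 :=
  rfl

theorem cornerUnipotentHom_injective : Function.Injective (cornerUnipotentHom m F) :=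
  fun _ _ h => Multiplicative.toAdd.injective <|
    symmCorner_injective (fromBlocks_inj.1 (Units.ext_iff.1 h)).2.1

variable {P : Subgroup (GL (Fin (m + 2) ⊕ Fin (m + 2)) F)}

theorem exists_eq_cornerUnipotentHom_of_forall_commute
    (hP : ∀ M, M ∈ P ↔ M ∈ symplecticSylowCarrier (m + 2) F)
    {M : GL (Fin (m + 2) ⊕ Fin (m + 2)) F}
    (hM : M ∈ P) (hcomm : ∀ N ∈ P, M * N = N * M) : ∃ p, M = cornerUnipotentHom m F p := by
  obtain ⟨A, B, hA, hB, hMAB⟩ := (hP M).1 hM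
  have hcomm' {C E} (hC : IsUnitriangular C) (hE : Eᵀ = E) :
      Commute M.val (fromBlocks C (C * E) 0 (Cᵀ)⁻¹) := by
    obtain ⟨N, hN, hNval⟩ := exists_mem_symplecticSylowCarrier hC hE
    exact hNval ▸ Commute.units_val (hcomm N ((hP N).2 hN))
  have hA1 : A = 1 := hA.eq_one_of_forall_conj_single fun j => by
    have := hcomm' IsUnitriangular.one (transpose_single j j (1 : F))
    rw [hMAB] at this
    simp only [Matrix.one_mul, transpose_one, inv_one] at this
    exact (fromBlocks_commute_fromBlocks_one_iff hA.isUnit_det _ _).1 this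
  subst hA1
  refine ⟨.ofAdd (B 0 0, B 0 1), Units.ext ?_⟩
  rw [hMAB, coe_cornerUnipotentHom, toAdd_ofAdd, ← eq_symmCorner_of_forall_conj hB fun C hC => ?_]
  · simp only [Matrix.one_mul, transpose_one, inv_one]
  have := (hcomm' hC transpose_zero).symm
  rw [hMAB] at this
  simp only [Matrix.one_mul, transpose_one, inv_one, Matrix.mul_zero] at this
  exact (fromBlocks_commute_fromBlocks_one_iff hC.isUnit_det _ _).1 this

theorem cornerUnipotentHom_mem_and_forall_commute [CharP F 2]
    (hP : ∀ M, M ∈ P ↔ M ∈ symplecticSylowCarrier (m + 2) F) (p : Multiplicative (F × F)) :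
    cornerUnipotentHom m F p ∈ P ∧
      ∀ N ∈ P, cornerUnipotentHom m F p * N = N * cornerUnipotentHom m F p := by
  refine ⟨(hP _).2 ⟨1, _, .one, symmCorner_transpose p.toAdd, ?_⟩, fun N hN => Units.ext ?_⟩
  · simp [coe_cornerUnipotentHom]
  obtain ⟨C, E, hC, -, hNCE⟩ := (hP N).1 hN
  rw [Units.val_mul, Units.val_mul, coe_cornerUnipotentHom, hNCE]
  exact ((fromBlocks_commute_fromBlocks_one_iff hC.isUnit_det _ _).2 (hC.conj_symmCorner _)).symm

theorem nonempty_center_mulEquiv_prod [CharP F 2]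
    (hP : ∀ M, M ∈ P ↔ M ∈ symplecticSylowCarrier (m + 2) F) :
    Nonempty (Subgroup.center P ≃* Multiplicative (F × F)) := by
  have hcentral := cornerUnipotentHom_mem_and_forall_commute hP
  let ψ : Multiplicative (F × F) →* Subgroup.center P :=
    ((cornerUnipotentHom m F).codRestrict P fun p => (hcentral p).1).codRestrict _ fun p =>
      Subgroup.mem_center_iff.2 fun N => Subtype.ext ((hcentral p).2 N N.2).symm
  refine ⟨(MulEquiv.ofBijective ψ ⟨fun p q h => cornerUnipotentHom_injective
    (congrArg (fun z => z.1.1) h), fun z => ?_⟩).symm⟩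
  obtain ⟨p, hp⟩ := exists_eq_cornerUnipotentHom_of_forall_commute hP z.1.2 fun N hN =>
    congrArg Subtype.val (Subgroup.mem_center_iff.1 z.2 ⟨N, hN⟩).symm
  exact ⟨p, Subtype.ext (Subtype.ext hp.symm)⟩

end SylowCenter

/-- Over a field with `2 ^ r` elements and `n ≥ 2`, the center of the Sylow
`2`-subgroup `P(n,F)` of `Sp(2n,F)` consists exactly of the block matrices
`[[I, D],[0, I]]` with `D = a • E_{1,1} + b • (E_{1,2} + E_{2,1})`, and is
isomorphic to `(ℤ/2ℤ)^(2r)`. -/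
theorem center_symplectic_sylow_char_two (r n : ℕ) (hn : 2 ≤ n)
    (F : Type) [Field F] [Fintype F] (hF : Fintype.card F = 2 ^ r)
    (P : Subgroup (GL (Fin n ⊕ Fin n) F))
    (hP : ∀ M : GL (Fin n ⊕ Fin n) F, M ∈ P ↔
      ∃ A B : Matrix (Fin n) (Fin n) F,
        IsUnitriangular A ∧ Bᵀ = B ∧
        (M : Matrix (Fin n ⊕ Fin n) (Fin n ⊕ Fin n) F) =
          Matrix.fromBlocks A (A * B) 0 (Aᵀ)⁻¹) :
    ((fun M : GL (Fin n ⊕ Fin n) F =>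
        (M : Matrix (Fin n ⊕ Fin n) (Fin n ⊕ Fin n) F)) ''
        {M : GL (Fin n ⊕ Fin n) F | M ∈ P ∧ ∀ N ∈ P, M * N = N * M} =
      {X : Matrix (Fin n ⊕ Fin n) (Fin n ⊕ Fin n) F | ∃ a b : F,
        X = Matrix.fromBlocks 1
          (a • Matrix.single (⟨0, by omega⟩ : Fin n) (⟨0, by omega⟩ : Fin n) (1 : F) +
           b • (Matrix.single (⟨0, by omega⟩ : Fin n) (⟨1, by omega⟩ : Fin n) (1 : F) +
                Matrix.single (⟨1, by omega⟩ : Fin n) (⟨0, by omega⟩ : Fin n) (1 : F)))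
          0 1}) ∧
    Nonempty (↥(Subgroup.center ↥P) ≃* Multiplicative (Fin (2 * r) → ZMod 2)) := by
  have : CharP F 2 := charP_of_card_eq_prime_pow hF
  obtain ⟨m, rfl⟩ : ∃ m, n = m + 2 := ⟨n - 2, by omega⟩
  refine ⟨Set.ext fun X => ⟨?_, ?_⟩, ?_⟩
  · rintro ⟨M, ⟨hM, hcomm⟩, rfl⟩
    obtain ⟨p, rfl⟩ := exists_eq_cornerUnipotentHom_of_forall_commute hP hM hcomm
    exact ⟨p.toAdd.1, p.toAdd.2, rfl⟩
  · rintro ⟨a, b, rfl⟩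
    exact ⟨_, cornerUnipotentHom_mem_and_forall_commute hP (.ofAdd (a, b)), rfl⟩
  · obtain ⟨e⟩ := nonempty_center_mulEquiv_prod hP
    obtain ⟨f⟩ := AddCommGroup.nonempty_addEquiv_fin_zmod_two (G := F × F) (d := 2 * r)
      CharTwo.add_self_eq_zero
      (by rw [Nat.card_prod, Nat.card_eq_fintype_card, hF, ← pow_add, two_mul])
    exact ⟨e.trans (AddEquiv.toMultiplicative f)⟩
end

section
/- Let p be a prime, r a positive integer, F a finite field with p^r elements, and m ≥ 2. Let D be an m×m matrix over F that is alternating, i.e., Dᵀ = −D and every diagonal entry of D is 0. Then A·D·Aᵀ = D for every A ∈ Up_m(F) if and only if there exists x ∈ F with D = x·(E_{1,2} − E_{2,1}) (i.e., all entries of D vanish except D_{1,2} = x and D_{2,1} = −x). -/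
open Matrix

namespace Matrix

variable {n R : Type*} [CommRing R]

theorem vecMulVec_sub_vecMulVec_smul_add (u v : n → R) (c : R) :
    vecMulVec u (c • u + v) - vecMulVec (c • u + v) u = vecMulVec u v - vecMulVec v u := by
  simp only [vecMulVec_add, add_vecMulVec, vecMulVec_smul, smul_vecMulVec]
  abel

variable [DecidableEq n]

theorem transpose_transvection (i j : n) (c : R) :
    (transvection i j c)ᵀ = transvection j i c := by
  rw [transvection, transpose_add, transpose_one, transpose_single, transvection]

theorem apply_eq_zero_of_transvection_mul_mul_transpose_eq [Fintype n] {M : Matrix n n R}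
    {i j l : n}
    (hM : transvection i j 1 * M * (transvection i j 1)ᵀ = M) (hl : l ≠ i) : M j l = 0 := by
  have hrow := congrFun (congrFun hM i) l
  rwa [transpose_transvection, mul_transvection_apply_of_ne _ _ _ _ hl,
    transvection_mul_apply_same, one_mul, add_eq_left] at hrow

theorem mul_single_one_mul_transpose [Fintype n] (A : Matrix n n R) (i j : n) :
    A * single i j 1 * Aᵀ = vecMulVec (A.col i) (A.col j) := by
  rw [single_eq_single_vecMulVec_single, mul_vecMulVec, vecMulVec_mul, vecMul_transpose,
    mulVec_single_one, mulVec_single_one]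

theorem eq_smul_single_sub_single_of_apply_eq_zero {m : ℕ}
    {D : Matrix (Fin (m + 2)) (Fin (m + 2)) R} (hD : Dᵀ = -D) (hD0 : ∀ i, D i i = 0)
    (hlower : ∀ j l, j ≠ 0 → (j, l) ≠ (1, 0) → D j l = 0) :
    D = D 0 1 • (single 0 1 1 - single 1 0 1) := by
  have hanti : ∀ a b, D b a = -D a b := fun a b => congrFun (congrFun hD a) b
  ext a b
  rcases eq_or_ne a 0 with rfl | ha
  · rcases eq_or_ne b 0 with rfl | hb
    · simp [hD0]
    rcases eq_or_ne b 1 with rfl | hb1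
    · simp
    · rw [← neg_neg (D 0 b), ← hanti, hlower b 0 hb (by simp [hb1])]
      simp [hb1.symm]
  · rcases eq_or_ne (a, b) (1, 0) with hab | hab
    · obtain ⟨rfl, rfl⟩ := Prod.ext_iff.mp hab
      simp [hanti 0 1]
    · have hab' : ¬(1 = a ∧ 0 = b) := fun h => hab (by rw [← h.1, ← h.2])
      simp [hlower a b ha hab, Ne.symm ha, hab']

end Matrix

section Unitriangular

variable {n : ℕ} {F : Type} [Field F]

theorem isUnitriangular_transvection {i j : Fin n} (hij : i < j) (c : F) :
    IsUnitriangular (transvection i j c) := by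
  refine ⟨fun k => ?_, fun k l hlk => ?_⟩
  · simp only [transvection, Matrix.add_apply, one_apply_eq, single_apply, add_eq_left,
      ite_eq_right_iff, and_imp]
    rintro rfl rfl
    exact absurd hij (lt_irrefl _)
  · simp only [transvection, Matrix.add_apply, one_apply_ne hlk.ne', single_apply, zero_add,
      ite_eq_right_iff, and_imp]
    rintro rfl rfl
    exact absurd hij hlk.not_gt

theorem IsUnitriangular.apply_of_le {A : Matrix (Fin n) (Fin n) F} (hA : IsUnitriangular A)
    {k l : Fin n} (hlk : l ≤ k) : A k l = if k = l then 1 else 0 := by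
  split_ifs with h
  · exact h ▸ hA.1 k
  · exact hA.2 k l (lt_of_le_of_ne hlk (Ne.symm h))

theorem IsUnitriangular.col_zero {A : Matrix (Fin (n + 2)) (Fin (n + 2)) F}
    (hA : IsUnitriangular A) : A.col 0 = Pi.single 0 1 := by
  ext k
  rw [col_apply, hA.apply_of_le (Fin.zero_le k), Pi.single_apply]

theorem IsUnitriangular.col_one {A : Matrix (Fin (n + 2)) (Fin (n + 2)) F}
    (hA : IsUnitriangular A) : A.col 1 = A 0 1 • Pi.single 0 1 + Pi.single 1 1 := by
  ext k
  rcases eq_or_ne k 0 with rfl | hk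
  · simp
  · rw [col_apply, hA.apply_of_le (Fin.one_le_of_ne_zero hk)]
    simp [Pi.single_apply, hk]

theorem IsUnitriangular.mul_mul_transpose_eq {A : Matrix (Fin (n + 2)) (Fin (n + 2)) F}
    (hA : IsUnitriangular A) :
    A * (single 0 1 1 - single 1 0 1) * Aᵀ = single 0 1 1 - single 1 0 1 := by
  rw [mul_sub, sub_mul, mul_single_one_mul_transpose, mul_single_one_mul_transpose, hA.col_zero,
    hA.col_one, vecMulVec_sub_vecMulVec_smul_add, ← single_eq_single_vecMulVec_single,
    ← single_eq_single_vecMulVec_single]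

theorem eq_smul_of_forall_isUnitriangular_mul_mul_transpose_eq
    {D : Matrix (Fin (n + 2)) (Fin (n + 2)) F} (hD : Dᵀ = -D) (hD0 : ∀ i, D i i = 0)
    (hfix : ∀ A, IsUnitriangular A → A * D * Aᵀ = D) :
    D = D 0 1 • (single 0 1 1 - single 1 0 1) := by
  have hrow : ∀ {i j : Fin (n + 2)} (l), i < j → l ≠ i → D j l = 0 := fun _ hij hl =>
    apply_eq_zero_of_transvection_mul_mul_transpose_eq
      (hfix _ (isUnitriangular_transvection hij 1)) hl
  refine eq_smul_single_sub_single_of_apply_eq_zero hD hD0 fun j l hj hjl => ?_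
  rcases eq_or_ne l 0 with rfl | hl
  · have hj1 : j ≠ 1 := by rintro rfl; exact hjl rfl
    refine hrow (i := 1) 0 ?_ zero_ne_one
    simp only [Fin.lt_def, Fin.val_one, ne_eq, Fin.ext_iff, Fin.val_zero] at hj hj1 ⊢
    omega
  · exact hrow l (Fin.pos_iff_ne_zero.mpr hj) hl

end Unitriangular

/-- For `D` alternating (`Dᵀ = -D` with zero diagonal), `A * D * Aᵀ = D` for all
unitriangular `A` iff `D = x • (E_{1,2} - E_{2,1})` for some `x ∈ F`. -/
theorem alternating_fixed_by_unitriangular (m : ℕ) (hm : 2 ≤ m) (F : Type) [Field F]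
    (D : Matrix (Fin m) (Fin m) F) (hD : Dᵀ = -D) (hD0 : ∀ i, D i i = 0) :
    (∀ A : Matrix (Fin m) (Fin m) F, IsUnitriangular A → A * D * Aᵀ = D) ↔
      ∃ x : F, D = x •
        (Matrix.single (⟨0, by omega⟩ : Fin m) (⟨1, by omega⟩ : Fin m) (1 : F) -
         Matrix.single (⟨1, by omega⟩ : Fin m) (⟨0, by omega⟩ : Fin m) (1 : F)) := by
  obtain ⟨n, rfl⟩ : ∃ n, m = n + 2 := ⟨m - 2, by omega⟩
  refine ⟨fun hfix =>
    ⟨D 0 1, eq_smul_of_forall_isUnitriangular_mul_mul_transpose_eq hD hD0 hfix⟩, ?_⟩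
  rintro ⟨x, rfl⟩ A hA
  rw [Matrix.mul_smul, Matrix.smul_mul]
  exact congrArg (x • ·) hA.mul_mul_transpose_eq
end
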